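/- The group defined by the presentation ⟨h, x | h⁵, x² h² x⁻¹ h⟩ (the quotient of the free group on two generators h, x by the normal closure of the relators h⁵ and x² h² x⁻¹ h) is finite of order 55. -/

import Mathlib

/-- The relators `h⁵` and `x² h² x⁻¹ h` in the free group on two generators
`h = of 0`, `x = of 1`. -/
def stmt18Rels : Set (FreeGroup (Fin 2)) :=
  {FreeGroup.of 0 ^ 5,
   FreeGroup.of 1 ^ 2 * FreeGroup.of 0 ^ 2 * (FreeGroup.of 1)⁻¹ * FreeGroup.of 0}

/-!
Write `a = h`, `b = x` and `p = b a³`. The conjugates `x_k = a^k p a^{-k}` satisfy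
`x_k x_{k+2} = x_{k+4}` and `x_{k+5} = x_k`, so `y_n = x_{2n}` is a Fibonacci sequence of
period 5. Its terms satisfy the relations of Conway's Fibonacci group `F(2,5)`, which is cyclic
of order 11 with `y₁ = y₀⁴`. Hence `p¹¹ = 1` and `a p a⁻¹ = p⁹`, so every element is `pⁱ aʲ` with
`i < 11`, `j < 5`, and the group has at most 55 elements. The action `a ↦ (t ↦ 9t)`,
`b ↦ (t ↦ 4t + 1)` on `ZMod 11` shows that `a` and `p` are nontrivial, hence of orders 5 and 11,
so 55 divides the order.
-/

section

variable {G : Type*} [Group G]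

theorem eq_pow_five_and_pow_eleven_eq_one {u d : G} (h₁ : d * u ^ 3 * d = u ^ 2)
    (h₂ : d ^ 2 * u⁻¹ * d = u ^ 3) : d = u ^ 5 ∧ u ^ 11 = 1 := by
  have hc : Commute d (u ^ 5) := by
    have hsq : (d * u ^ 3) * (d * u ^ 3) = u ^ 5 := by
      rw [← mul_assoc, h₁]; group
    have := (Commute.refl (d * u ^ 3)).mul_right (Commute.refl (d * u ^ 3))
    rw [hsq] at this
    simpa using this.mul_left (Commute.pow_pow_self u 3 5).inv_left
  have h₁' : d * u ^ (-2 : ℤ) * d = u ^ (-3 : ℤ) := by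
    calc d * u ^ (-2 : ℤ) * d = (d * u ^ 3 * d) * (d⁻¹ * u ^ 5 * d)⁻¹ := by group
      _ = u ^ (-3 : ℤ) := by rw [h₁, hc.inv_left.eq]; group
  have h₂' : u⁻¹ * d = (d ^ 2)⁻¹ * u ^ 3 := by
    rw [← h₂]; group
  have hE : d ^ 2 * u = u ^ 6 * d := by
    calc d ^ 2 * u = u ^ 3 * (d * u⁻¹ * ((d ^ 2)⁻¹ * u ^ 3))⁻¹ * d := by group
      _ = u ^ 3 * (d * u⁻¹ * (u⁻¹ * d))⁻¹ * d := by rw [h₂']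
      _ = u ^ 3 * (d * u ^ (-2 : ℤ) * d)⁻¹ * d := by group
      _ = u ^ 6 * d := by rw [h₁']; group
  have hE' : u⁻¹ * (d ^ 2)⁻¹ = d⁻¹ * u ^ (-6 : ℤ) := by
    rw [← mul_inv_rev, hE]; group
  have hsq : (d ^ 2)⁻¹ * u ^ 4 * (d ^ 2)⁻¹ * u ^ 4 = u ^ 5 * d := by
    calc (d ^ 2)⁻¹ * u ^ 4 * (d ^ 2)⁻¹ * u ^ 4
        = ((d ^ 2)⁻¹ * u ^ 3) * u * ((d ^ 2)⁻¹ * u ^ 3) * u := by group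
      _ = (u⁻¹ * d) * u * (u⁻¹ * d) * u := by rw [← h₂']
      _ = u⁻¹ * (d ^ 2 * u) := by rw [sq]; group
      _ = u ^ 5 * d := by rw [hE]; group
  have hkey : u ^ 2 * d ^ 4 = 1 := by
    calc u ^ 2 * d ^ 4 = u ^ 2 * d * (d ^ 2 * (u ^ 5)⁻¹) * (u ^ 5 * d) := by group
      _ = u ^ 2 * d * ((u ^ 5)⁻¹ * d ^ 2) * ((d ^ 2)⁻¹ * u ^ 4 * (d ^ 2)⁻¹ * u ^ 4) := by
          rw [(hc.pow_left 2).inv_right.eq, hsq]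
      _ = u ^ 2 * d * (u⁻¹ * (d ^ 2)⁻¹) * u ^ 4 := by group
      _ = 1 := by rw [hE']; group
  have hud : Commute u d := by
    have h2 : Commute d (u ^ 2) := by
      rw [eq_inv_of_mul_eq_one_left hkey]
      exact (Commute.self_pow d 4).inv_right
    have hu : u ^ 5 * (u ^ 2)⁻¹ * (u ^ 2)⁻¹ = u := by group
    exact (hu ▸ (hc.mul_right h2.inv_right).mul_right h2.inv_right).symm
  have hd : d = u ^ 5 := by
    calc d = u⁻¹ * (u * d ^ 2) * d⁻¹ := by group
      _ = u ^ 5 := by rw [(hud.pow_right 2).eq, hE]; group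
  refine ⟨hd, ?_⟩
  calc u ^ 11 = (u ^ 5 * u ^ 3 * u ^ 5) * (u ^ 2)⁻¹ := by group
    _ = 1 := by rw [← hd, h₁]; group

theorem pow_eleven_eq_one_and_eq_pow_four_of_fib_period_five {y : ℕ → G}
    (hfib : ∀ n, y n * y (n + 1) = y (n + 2)) (hper : ∀ n, y (n + 5) = y n) :
    y 0 ^ 11 = 1 ∧ y 1 = y 0 ^ 4 := by
  set u := y 0
  set v := y 1
  have h₃₄ : y 3 * y 4 = u := (hfib 3).trans (hper 0)
  have h₄₀ : y 4 * u = v := by simpa only [hper] using hfib 4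
  have h₃ : y 3 = v * (u * v) := by rw [← hfib 1, ← hfib 0]
  have h₄ : y 4 = u * v * (v * (u * v)) := by rw [← hfib 2, ← h₃, ← hfib 0]
  have hA : v * u * (v * v) = u ^ 2 := by
    calc v * u * (v * v) = y 3 * y 4 * u := by rw [h₃, mul_assoc _ (y 4), h₄₀]; group
      _ = u ^ 2 := by rw [h₃₄, sq]
  have hC : u ^ 3 * v * u = v * v := by
    calc u ^ 3 * v * u = v * (u * ((v * u)⁻¹ * u ^ 2) * u * v * u) := by group
      _ = v * (u * (v * v) * u * v * u) := by rw [eq_inv_mul_of_mul_eq hA]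
      _ = v * v := by
          rw [show u * (v * v) * u * v * u = v by simpa only [h₄, mul_assoc] using h₄₀]
  obtain ⟨hd, hu⟩ := eq_pow_five_and_pow_eleven_eq_one (u := u) (d := v * u)
    (by calc v * u * u ^ 3 * (v * u) = v * u * (u ^ 3 * v * u) := by group
          _ = u ^ 2 := by rw [hC, hA])
    (by calc (v * u) ^ 2 * u⁻¹ * (v * u) = v * u * (v * v) * u := by rw [sq]; group
          _ = u ^ 3 := by rw [hA]; group)
  exact ⟨hu, by rw [eq_mul_inv_of_mul_eq hd]; group⟩

theorem pow_eleven_eq_one_and_conj_eq {a b : G} (ha : a ^ 5 = 1)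
    (hr : b ^ 2 * a ^ 2 * b⁻¹ * a = 1) :
    (b * a ^ 3) ^ 11 = 1 ∧ a * (b * a ^ 3) * a⁻¹ = (b * a ^ 3) ^ 9 := by
  set x : ℕ → G := fun k => MulAut.conj (a ^ k) (b * a ^ 3) with hx
  have hx_add (k j : ℕ) : x (k + j) = MulAut.conj (a ^ k) (x j) := by
    simp only [hx, pow_add, map_mul, MulAut.mul_apply]
  have hx_per (k : ℕ) : x (k + 5) = x k := by simp only [hx, pow_add, ha, mul_one]
  have hx_base : x 0 * x 2 = x 4 := by
    simp only [hx, MulAut.conj_apply, pow_zero, one_mul, inv_one, mul_one]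
    calc b * a ^ 3 * (a ^ 2 * (b * a ^ 3) * (a ^ 2)⁻¹) = b * a ^ 5 * b * a := by group
      _ = b ^ 2 * a := by rw [ha, sq]; group
      _ = (b ^ 2 * a ^ 2 * b⁻¹ * a) * (a ^ 5)⁻¹ * (a ^ 4 * (b * a ^ 3) * (a ^ 4)⁻¹) := by
          group
      _ = a ^ 4 * (b * a ^ 3) * (a ^ 4)⁻¹ := by rw [hr, ha]; group
  have hx_fib (k : ℕ) : x k * x (k + 2) = x (k + 4) := by
    rw [hx_add k 2, hx_add k 4, ← hx_base, map_mul, ← hx_add k 0, add_zero]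
  obtain ⟨h11, h4⟩ :=
    pow_eleven_eq_one_and_eq_pow_four_of_fib_period_five (y := fun n => x (2 * n))
    (fun n => by simpa only [mul_add, add_assoc] using hx_fib (2 * n))
    (fun n => by simp only [mul_add, hx_per])
  have hx0 : x 0 = b * a ^ 3 := by simp only [hx, pow_zero, map_one, MulAut.one_apply]
  simp only [mul_zero, mul_one, hx0] at h11 h4
  refine ⟨h11, ?_⟩
  calc a * (b * a ^ 3) * a⁻¹ = x 6 := by
        rw [hx_per 1]; simp only [hx, pow_one, MulAut.conj_apply]
    _ = x 2 * (x 0 * x 2) := by rw [← hx_fib 2, ← hx_fib 0]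
    _ = (b * a ^ 3) ^ 9 := by rw [hx0, h4]; group

theorem conj_pow_eq_pow_of_conj_eq {a p : G} {r : ℕ} (h : a * p * a⁻¹ = p ^ r) (k i : ℕ) :
    a ^ k * p ^ i * (a ^ k)⁻¹ = p ^ (r ^ k * i) := by
  induction k generalizing i with
  | zero => simp
  | succ k ih =>
    calc a ^ (k + 1) * p ^ i * (a ^ (k + 1))⁻¹
        = a * (a ^ k * p ^ i * (a ^ k)⁻¹) * a⁻¹ := by group
      _ = p ^ (r ^ (k + 1) * i) := by rw [ih, ← conj_pow, h, ← pow_mul]; ring_nf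

theorem exists_pow_mul_pow_eq_of_mem_closure {a p g : G} {m n r : ℕ} (hm : 0 < m) (hn : 0 < n)
    (ha : a ^ m = 1) (hp : p ^ n = 1) (hconj : a * p * a⁻¹ = p ^ r)
    (hg : g ∈ Subgroup.closure {a, p}) : ∃ i j : ℕ, p ^ i * a ^ j = g := by
  have hmul (k i j : ℕ) : a ^ k * (p ^ i * a ^ j) = p ^ (r ^ k * i) * a ^ (k + j) := by
    rw [← conj_pow_eq_pow_of_conj_eq hconj]; group
  have ha_inv : a⁻¹ = a ^ (m - 1) :=
    (eq_inv_of_mul_eq_one_left (by rw [← pow_succ, Nat.sub_add_cancel hm, ha])).symm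
  have hp_inv : p⁻¹ = p ^ (n - 1) :=
    (eq_inv_of_mul_eq_one_left (by rw [← pow_succ, Nat.sub_add_cancel hn, hp])).symm
  induction hg using Subgroup.closure_induction_left with
  | one => exact ⟨0, 0, by simp⟩
  | mul_left x hx y _ ih =>
    obtain ⟨i, j, rfl⟩ := ih
    rcases hx with rfl | rfl
    · exact ⟨_, _, by simpa using (hmul 1 i j).symm⟩
    · exact ⟨i + 1, j, by group⟩
  | inv_mul_cancel x hx y _ ih =>
    obtain ⟨i, j, rfl⟩ := ih
    rcases hx with rfl | rfl
    · exact ⟨_, _, by rw [ha_inv, hmul]⟩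
    · exact ⟨n - 1 + i, j, by rw [hp_inv, pow_add]; group⟩

theorem surjective_pow_mul_pow {a p : G} {m n r : ℕ} (hm : 0 < m) (hn : 0 < n)
    (ha : a ^ m = 1) (hp : p ^ n = 1) (hconj : a * p * a⁻¹ = p ^ r)
    (htop : Subgroup.closure {a, p} = ⊤) :
    Function.Surjective fun ij : Fin n × Fin m => p ^ (ij.1 : ℕ) * a ^ (ij.2 : ℕ) := by
  have hmod {x : G} {k : ℕ} (hx : x ^ k = 1) (i : ℕ) : x ^ (i % k) = x ^ i := by
    rw [← pow_mod_orderOf, Nat.mod_mod_of_dvd _ (orderOf_dvd_of_pow_eq_one hx), pow_mod_orderOf]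
  intro g
  obtain ⟨i, j, rfl⟩ :=
    exists_pow_mul_pow_eq_of_mem_closure hm hn ha hp hconj (htop ▸ Subgroup.mem_top g)
  exact ⟨(⟨i % n, Nat.mod_lt i hn⟩, ⟨j % m, Nat.mod_lt j hm⟩),
    by simp only [hmod ha, hmod hp]⟩

theorem natCard_eq_fiftyFive {a b : G} (ha : a ^ 5 = 1) (hr : b ^ 2 * a ^ 2 * b⁻¹ * a = 1)
    (hgen : Subgroup.closure {a, b} = ⊤) (ha₁ : a ≠ 1) (hp₁ : b * a ^ 3 ≠ 1) :
    Nat.card G = 55 := by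
  obtain ⟨hp, hconj⟩ := pow_eleven_eq_one_and_conj_eq ha hr
  have htop : Subgroup.closure {a, b * a ^ 3} = ⊤ := by
    refine eq_top_iff.mpr (hgen ▸ Subgroup.closure_le _ |>.mpr ?_)
    have hb : b * a ^ 3 * a ^ 2 = b := by
      calc b * a ^ 3 * a ^ 2 = b * a ^ 5 := by group
        _ = b := by rw [ha, mul_one]
    refine Set.insert_subset_iff.mpr ⟨Subgroup.subset_closure (Set.mem_insert _ _), ?_⟩
    rw [Set.singleton_subset_iff]
    have := (Subgroup.closure {a, b * a ^ 3}).mul_mem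
      (Subgroup.subset_closure (Set.mem_insert_of_mem _ rfl))
      ((Subgroup.closure _).pow_mem (Subgroup.subset_closure (Set.mem_insert _ _)) 2)
    rwa [hb] at this
  have hs := surjective_pow_mul_pow (by norm_num) (by norm_num) ha hp hconj htop
  have : Finite G := Finite.of_surjective _ hs
  have hle : Nat.card G ≤ 55 := by simpa using Nat.card_le_card_of_surjective _ hs
  have : Fact (Nat.Prime 5) := ⟨by norm_num⟩
  have : Fact (Nat.Prime 11) := ⟨by norm_num⟩
  have hdvd : 11 * 5 ∣ Nat.card G := Nat.Coprime.mul_dvd_of_dvd_of_dvd (by norm_num)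
    (orderOf_eq_prime hp hp₁ ▸ orderOf_dvd_natCard _)
    (orderOf_eq_prime ha ha₁ ▸ orderOf_dvd_natCard _)
  exact le_antisymm hle (Nat.le_of_dvd Nat.card_pos hdvd)

end

def permMulNine : Equiv.Perm (ZMod 11) := ⟨(9 * ·), (5 * ·), by decide, by decide⟩

def permFourMulAddOne : Equiv.Perm (ZMod 11) := ⟨(4 * · + 1), (3 * · + 8), by decide, by decide⟩

/-- The group `⟨h, x | h⁵, x² h² x⁻¹ h⟩` is finite of order `55`. -/
theorem stmt_18 : Nat.card (PresentedGroup stmt18Rels) = 55 := by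
  have ha : (PresentedGroup.of 0 : PresentedGroup stmt18Rels) ^ 5 = 1 := by
    simp only [PresentedGroup.of, ← map_pow]
    exact PresentedGroup.one_of_mem (by simp [stmt18Rels])
  have hr : (PresentedGroup.of 1 : PresentedGroup stmt18Rels) ^ 2 * PresentedGroup.of 0 ^ 2 *
      (PresentedGroup.of 1)⁻¹ * PresentedGroup.of 0 = 1 := by
    simp only [PresentedGroup.of, ← map_pow, ← map_inv, ← map_mul]
    exact PresentedGroup.one_of_mem (by simp [stmt18Rels])
  have hrel : ∀ r ∈ stmt18Rels, FreeGroup.lift ![permMulNine, permFourMulAddOne] r = 1 := by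
    rintro r (rfl | rfl) <;>
      simp only [map_mul, map_pow, map_inv, FreeGroup.lift_apply_of, Matrix.cons_val_zero,
        Matrix.cons_val_one] <;>
      decide
  have hof (i : Fin 2) : PresentedGroup.toGroup hrel (PresentedGroup.of i) =
      ![permMulNine, permFourMulAddOne] i := PresentedGroup.toGroup.of hrel
  refine natCard_eq_fiftyFive ha hr ?_ (ne_one_of_map (f := PresentedGroup.toGroup hrel) ?_)
    (ne_one_of_map (f := PresentedGroup.toGroup hrel) ?_)
  · rw [← PresentedGroup.closure_range_of]
    congr 1
    ext x
    simp [Fin.exists_fin_two, eq_comm]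
  · rw [hof]; decide
  · rw [map_mul, map_pow, hof, hof]; decide
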